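/- For every n ≥ 0 and every x ∈ ℤ, under P^x the process Z_k := v_{n−k}(W_k)·∏_{j=1}^{k} (1 − H(v_{n−j}(W_j))), for k = 0, 1, …, n (empty product = 1), is a martingale with respect to the natural filtration of (W_k). Consequently, for all integers 0 ≤ n ≤ m and all x ∈ ℤ, v_m(x) = E^x[ v_n(W_{m−n})·∏_{j=1}^{m−n} (1 − H(v_{m−j}(W_j))) ]. -/

import Mathlib

/-!
Conditionally on the walk up to time `k`, the next increment `ξ (k+1)` is independent with law
`y ↦ a (-y)`. Since `s * (1 - H s) = Q s`, the process `Z_{k+1}` equals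
`Q (v_{n-k-1} (W_k + ξ (k+1)))` times the weight of `Z_k`, and averaging over the increment turns
`Q (v_{n-k-1} (W_k + ·))` into `v_{n-k} (W_k)` by the recursion for `v`: this is the martingale
step. Criticality gives `0 ≤ Q s ≤ s` on `[0, 1]`, so every factor lies in `[0, 1]` and `Z` is
bounded. Taking expectations from time `m - n` back to time `0` gives the formula for `v m x`.
-/

open Filter Real Set MeasureTheory ProbabilityTheory

/-- The random walk started at `x` with increments `ξ 1, ξ 2, …`:
`walk ξ x n ω = x + ξ₁(ω) + ⋯ + ξₙ(ω)`. -/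
def walk {Ω : Type} (ξ : ℕ → Ω → ℤ) (x : ℤ) (n : ℕ) (ω : Ω) : ℤ :=
  x + ∑ i ∈ Finset.Icc 1 n, ξ i ω

/-- `Hfun p s = (s - Q(s))/s` where `Q(s) = 1 - Σₖ pₖ (1-s)ᵏ`, with `Hfun p 0 = 0`. -/
noncomputable def Hfun (p : ℕ → ℝ) (s : ℝ) : ℝ :=
  if s = 0 then 0 else (s - (1 - ∑' k : ℕ, p k * (1 - s) ^ k)) / s

/-- The natural filtration generated by the random walk `walk ξ x`. -/
noncomputable def walkFiltration {Ω : Type} [m0 : MeasurableSpace Ω] (ξ : ℕ → Ω → ℤ)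
    (hξmeas : ∀ n, Measurable (ξ n)) (x : ℤ) : Filtration ℕ m0 :=
  Filtration.natural (fun n => walk ξ x n) (fun n => by
    have h : Measurable (walk ξ x n) := by
      unfold walk
      exact measurable_const.add (Finset.measurable_sum _ fun i _ => hξmeas i)
    exact h.stronglyMeasurable)

theorem summable_of_tsum_ne_zero {ι α : Type*} [AddCommMonoid α] [TopologicalSpace α]
    {f : ι → α} (h : ∑' i, f i ≠ 0) : Summable f := by
  by_contra hf
  exact h (tsum_eq_zero_of_not_summable hf)

theorem tsum_mul_mem_Icc {ι : Type*} {w g : ι → ℝ} (hw0 : ∀ i, 0 ≤ w i) (hw1 : ∑' i, w i = 1)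
    (hg : ∀ i, g i ∈ Icc (0 : ℝ) 1) : ∑' i, w i * g i ∈ Icc (0 : ℝ) 1 := by
  have hw : Summable w := summable_of_tsum_ne_zero (by simp [hw1])
  have hle : ∀ i, w i * g i ≤ w i := fun i => mul_le_of_le_one_right (hw0 i) (hg i).2
  have hnonneg : ∀ i, 0 ≤ w i * g i := fun i => mul_nonneg (hw0 i) (hg i).1
  refine ⟨tsum_nonneg hnonneg, ?_⟩
  calc ∑' i, w i * g i ≤ ∑' i, w i := (hw.of_nonneg_of_le hnonneg hle).tsum_le_tsum hle hw
    _ = 1 := hw1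

noncomputable def Qfun (p : ℕ → ℝ) (s : ℝ) : ℝ :=
  1 - ∑' k : ℕ, p k * (1 - s) ^ k

section GeneratingFunction

variable {p : ℕ → ℝ} {s : ℝ}

theorem one_sub_pow_mem_Icc (hs : s ∈ Icc (0 : ℝ) 1) (k : ℕ) : (1 - s) ^ k ∈ Icc (0 : ℝ) 1 :=
  ⟨pow_nonneg (by linarith [hs.2]) k, pow_le_one₀ (by linarith [hs.2]) (by linarith [hs.1])⟩

theorem Qfun_zero (hp1 : ∑' k, p k = 1) : Qfun p 0 = 0 := by
  simp [Qfun, hp1]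

theorem Qfun_mem_Icc (hp0 : ∀ k, 0 ≤ p k) (hp1 : ∑' k, p k = 1) (hs : s ∈ Icc (0 : ℝ) 1) :
    Qfun p s ∈ Icc (0 : ℝ) 1 := by
  have h := tsum_mul_mem_Icc hp0 hp1 (one_sub_pow_mem_Icc hs)
  simp only [Qfun, mem_Icc] at h ⊢
  constructor <;> linarith [h.1, h.2]

theorem Qfun_le_self (hp0 : ∀ k, 0 ≤ p k) (hp1 : ∑' k, p k = 1)
    (hmean_summ : Summable fun k : ℕ => (k : ℝ) * p k) (hmean : ∑' k : ℕ, (k : ℝ) * p k ≤ 1)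
    (hs : s ∈ Icc (0 : ℝ) 1) : Qfun p s ≤ s := by
  have hp : Summable p := summable_of_tsum_ne_zero (by simp [hp1])
  have hpow := one_sub_pow_mem_Icc hs
  have hgen : Summable fun k => p k * (1 - s) ^ k :=
    hp.of_nonneg_of_le (fun k => mul_nonneg (hp0 k) (hpow k).1)
      fun k => mul_le_of_le_one_right (hp0 k) (hpow k).2
  have hbernoulli : ∀ k : ℕ, p k - p k * (1 - s) ^ k ≤ (k : ℝ) * p k * s := fun k => by
    have h := one_add_mul_le_pow (a := -s) (by linarith [hs.2]) k
    rw [← sub_eq_add_neg] at h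
    nlinarith [mul_le_mul_of_nonneg_left h (hp0 k)]
  calc Qfun p s = ∑' k, (p k - p k * (1 - s) ^ k) := by
        rw [Qfun, hp.tsum_sub hgen, hp1]
    _ ≤ ∑' k : ℕ, (k : ℝ) * p k * s :=
        (hp.sub hgen).tsum_le_tsum hbernoulli (hmean_summ.mul_right s)
    _ = (∑' k : ℕ, (k : ℝ) * p k) * s := tsum_mul_right
    _ ≤ s := mul_le_of_le_one_left hs.1 hmean

theorem one_sub_Hfun_of_ne_zero (hs : s ≠ 0) : 1 - Hfun p s = Qfun p s / s := by
  rw [Hfun, if_neg hs, Qfun]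
  field_simp
  ring

theorem mul_one_sub_Hfun (hp1 : ∑' k, p k = 1) (s : ℝ) : s * (1 - Hfun p s) = Qfun p s := by
  rcases eq_or_ne s 0 with rfl | hs
  · rw [zero_mul, Qfun_zero hp1]
  · rw [one_sub_Hfun_of_ne_zero hs, mul_div_cancel₀ _ hs]

theorem one_sub_Hfun_mem_Icc (hp0 : ∀ k, 0 ≤ p k) (hp1 : ∑' k, p k = 1)
    (hmean_summ : Summable fun k : ℕ => (k : ℝ) * p k) (hmean : ∑' k : ℕ, (k : ℝ) * p k ≤ 1)
    (hs : s ∈ Icc (0 : ℝ) 1) : 1 - Hfun p s ∈ Icc (0 : ℝ) 1 := by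
  rcases hs.1.eq_or_lt with rfl | hpos
  · simp [Hfun]
  rw [one_sub_Hfun_of_ne_zero hpos.ne']
  exact ⟨div_nonneg (Qfun_mem_Icc hp0 hp1 hs).1 hpos.le,
    div_le_one_of_le₀ (Qfun_le_self hp0 hp1 hmean_summ hmean hs) hpos.le⟩

theorem mem_Icc_of_Qfun_recursion {a : ℤ → ℝ} {v : ℕ → ℤ → ℝ} (hp0 : ∀ k, 0 ≤ p k)
    (hp1 : ∑' k, p k = 1) (ha0 : ∀ y, 0 ≤ a y) (ha1 : ∑' y, a y = 1)
    (hv0 : ∀ x, v 0 x ∈ Icc (0 : ℝ) 1)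
    (hvrec : ∀ n x, v (n + 1) x = ∑' y, a y * Qfun p (v n (x - y))) :
    ∀ n x, v n x ∈ Icc (0 : ℝ) 1 := by
  intro n
  induction n with
  | zero => exact hv0
  | succ n ih =>
    intro x
    rw [hvrec]
    exact tsum_mul_mem_Icc ha0 ha1 fun y => Qfun_mem_Icc hp0 hp1 (ih _)

end GeneratingFunction

section Independence

variable {Ω β : Type*} {m m' m0 : MeasurableSpace Ω} {P : Measure Ω}

theorem setIntegral_indicator_of_indep (hm : m ≤ m0) (hm' : m' ≤ m0) (hind : Indep m m' P)
    {B s : Set Ω} (hB : MeasurableSet[m'] B) (hs : MeasurableSet[m] s) {g : Ω → ℝ}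
    (hg : Measurable[m] g) :
    ∫ ω in s, B.indicator g ω ∂P = P.real B * ∫ ω in s, g ω ∂P := by
  have hsplit : s.indicator (B.indicator g) = B.indicator 1 * s.indicator g := by
    ext ω
    by_cases hωB : ω ∈ B <;> by_cases hωs : ω ∈ s <;> simp [hωB, hωs]
  have hindep : IndepFun (B.indicator (1 : Ω → ℝ)) (s.indicator g) P := by
    rw [IndepFun_iff_Indep]
    exact indep_of_indep_of_le_right (indep_of_indep_of_le_left hind.symm
      (measurable_const.indicator hB).comap_le) ((hg.indicator hs).comap_le)
  rw [← integral_indicator (hm s hs), hsplit,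
    hindep.integral_mul_eq_mul_integral
      (measurable_const.indicator (hm' B hB)).aestronglyMeasurable
      ((hg.mono hm le_rfl).indicator (hm s hs)).aestronglyMeasurable,
    integral_indicator_one (hm' B hB), integral_indicator (hm s hs)]

variable [MeasurableSpace β] [Countable β] [MeasurableSingletonClass β] {Y : Ω → β}

theorem summable_measureReal_preimage_singleton [IsFiniteMeasure P] (hY : Measurable Y) :
    Summable fun y => P.real (Y ⁻¹' {y}) := by
  refine ENNReal.summable_toReal ?_
  rw [← measure_iUnion (fun y z hyz => (Set.disjoint_singleton.2 hyz).preimage Y)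
    fun y => hY (measurableSet_singleton y)]
  exact measure_ne_top _ _

theorem setIntegral_comp_of_indep [IsProbabilityMeasure P] (hm : m ≤ m0) (hY : Measurable Y)
    (hind : Indep m (MeasurableSpace.comap Y inferInstance) P) {h : β → Ω → ℝ}
    (hh : ∀ y, Measurable[m] (h y)) {C : ℝ} (hC : ∀ y ω, ‖h y ω‖ ≤ C) {s : Set Ω}
    (hs : MeasurableSet[m] s) :
    ∫ ω in s, h (Y ω) ω ∂P = ∫ ω in s, ∑' y, P.real (Y ⁻¹' {y}) * h y ω ∂P := by
  have hB : ∀ y, MeasurableSet[MeasurableSpace.comap Y inferInstance] (Y ⁻¹' {y}) :=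
    fun y => ⟨{y}, measurableSet_singleton y, rfl⟩
  have hfibre : ∀ y (g : Ω → ℝ), Measurable[m] g →
      ∫ ω in s, (Y ⁻¹' {y}).indicator g ω ∂P = P.real (Y ⁻¹' {y}) * ∫ ω in s, g ω ∂P :=
    fun y g hg => setIntegral_indicator_of_indep hm hY.comap_le hind (hB y) hs hg
  have hint : ∀ y, Integrable (h y) (P.restrict s) := fun y =>
    .of_bound ((hh y).mono hm le_rfl).aestronglyMeasurable C (ae_of_all _ (hC y))
  have hnorm_le : ∀ y, ∫ ω in s, ‖h y ω‖ ∂P ≤ |C| := fun y => by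
    calc ∫ ω in s, ‖h y ω‖ ∂P ≤ ∫ _ in s, |C| ∂P :=
          integral_mono (hint y).norm (integrable_const _) fun ω => (hC y ω).trans (le_abs_self C)
      _ = |C| * P.real s := by rw [setIntegral_const, smul_eq_mul, mul_comm]
      _ ≤ |C| := mul_le_of_le_one_right (abs_nonneg C) measureReal_le_one
  have hsummable : Summable fun y => P.real (Y ⁻¹' {y}) * ∫ ω in s, ‖h y ω‖ ∂P :=
    ((summable_measureReal_preimage_singleton hY).mul_right |C|).of_nonneg_of_le
      (fun y => mul_nonneg measureReal_nonneg (integral_nonneg fun ω => norm_nonneg _))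
      fun y => mul_le_mul_of_nonneg_left (hnorm_le y) measureReal_nonneg
  calc ∫ ω in s, h (Y ω) ω ∂P = ∫ ω in s, ∑' y, (Y ⁻¹' {y}).indicator (h y) ω ∂P := by
        congr with ω
        rw [tsum_eq_single (f := fun y => (Y ⁻¹' {y}).indicator (h y) ω) (Y ω)
          fun y hy => indicator_of_notMem (show ω ∉ Y ⁻¹' {y} from Ne.symm hy) _]
        exact (indicator_of_mem (s := Y ⁻¹' {Y ω}) rfl _).symm
    _ = ∑' y, ∫ ω in s, (Y ⁻¹' {y}).indicator (h y) ω ∂P := by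
        refine (integral_tsum_of_summable_integral_norm (fun y => (hint y).indicator
          (hY (measurableSet_singleton y))) ?_).symm
        refine hsummable.congr fun y => ?_
        simp only [norm_indicator_eq_indicator_norm]
        exact (hfibre y _ (measurable_norm.comp (hh y))).symm
    _ = ∑' y, ∫ ω in s, P.real (Y ⁻¹' {y}) * h y ω ∂P := by
        simp only [hfibre _ _ (hh _), integral_const_mul]
    _ = ∫ ω in s, ∑' y, P.real (Y ⁻¹' {y}) * h y ω ∂P := by
        refine integral_tsum_of_summable_integral_norm (fun y => (hint y).const_mul _) ?_
        simpa only [norm_mul, Real.norm_of_nonneg measureReal_nonneg, integral_const_mul]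
          using hsummable

end Independence

theorem integral_eq_integral_zero_of_condExp_succ {Ω : Type*} {m0 : MeasurableSpace Ω}
    {P : Measure Ω} [IsFiniteMeasure P] {ℱ : Filtration ℕ m0} {f : ℕ → Ω → ℝ} {N : ℕ}
    (hf : ∀ k < N, P[f (k + 1) | ℱ k] =ᵐ[P] f k) : ∫ ω, f N ω ∂P = ∫ ω, f 0 ω ∂P := by
  induction N with
  | zero => rfl
  | succ N ih =>
    rw [← integral_condExp (ℱ.le N), integral_congr_ae (hf N N.lt_succ_self),
      ih fun k hk => hf k (hk.trans N.lt_succ_self)]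

section Walk

variable {Ω : Type} {ξ : ℕ → Ω → ℤ} {x : ℤ}

@[simp]
theorem walk_zero (ω : Ω) : walk ξ x 0 ω = x := by
  simp [walk]

theorem walk_succ (k : ℕ) (ω : Ω) : walk ξ x (k + 1) ω = walk ξ x k ω + ξ (k + 1) ω := by
  rw [walk, walk, Finset.sum_Icc_succ_top (by omega), add_assoc]

variable [MeasurableSpace Ω]

theorem measurable_walk_walkFiltration (hξmeas : ∀ n, Measurable (ξ n)) {j k : ℕ} (hjk : j ≤ k) :
    Measurable[walkFiltration ξ hξmeas x k] (walk ξ x j) :=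
  ((Filtration.stronglyAdapted_natural _ j).mono ((walkFiltration ξ hξmeas x).mono hjk)).measurable

theorem walkFiltration_le_iSup_comap (hξmeas : ∀ n, Measurable (ξ n)) (k : ℕ) :
    walkFiltration ξ hξmeas x k ≤ ⨆ i ∈ Icc 1 k, MeasurableSpace.comap (ξ i) inferInstance := by
  refine iSup₂_le fun j hjk => Measurable.comap_le ?_
  refine measurable_const.add (Finset.measurable_sum _ fun i hi => Measurable.of_comap_le ?_)
  rw [Finset.mem_Icc] at hi
  exact le_iSup₂ (f := fun i (_ : i ∈ Icc 1 k) => MeasurableSpace.comap (ξ i) inferInstance) i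
    ⟨hi.1, hi.2.trans hjk⟩

theorem indep_walkFiltration_increment {P : Measure Ω} (hξmeas : ∀ n, Measurable (ξ n))
    (hξindep : iIndepFun ξ P) (k : ℕ) :
    Indep (walkFiltration ξ hξmeas x k) (MeasurableSpace.comap (ξ (k + 1)) inferInstance) P := by
  have h := indep_iSup_of_disjoint (fun i => (hξmeas i).comap_le) hξindep
    (S := Icc 1 k) (T := {k + 1}) (by simp)
  simp only [mem_singleton_iff, iSup_iSup_eq_left] at h
  exact indep_of_indep_of_le_left h (walkFiltration_le_iSup_comap hξmeas k)

end Walk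

section FeynmanKac

variable {Ω : Type} {p : ℕ → ℝ} {a : ℤ → ℝ} {v : ℕ → ℤ → ℝ} {ξ : ℕ → Ω → ℤ} {x : ℤ} {n k : ℕ}

noncomputable def fkWeight (p : ℕ → ℝ) (v : ℕ → ℤ → ℝ) (ξ : ℕ → Ω → ℤ) (x : ℤ) (n k : ℕ)
    (ω : Ω) : ℝ :=
  ∏ j ∈ Finset.Icc 1 k, (1 - Hfun p (v (n - j) (walk ξ x j ω)))

-- `fkProcess p v ξ x n k` is the process `Z_k` of the statement, for the horizon `n`.
noncomputable def fkProcess (p : ℕ → ℝ) (v : ℕ → ℤ → ℝ) (ξ : ℕ → Ω → ℤ) (x : ℤ) (n k : ℕ)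
    (ω : Ω) : ℝ :=
  v (n - k) (walk ξ x k ω) * fkWeight p v ξ x n k ω

theorem fkProcess_zero (ω : Ω) : fkProcess p v ξ x n 0 ω = v n x := by
  simp [fkProcess, fkWeight]

theorem fkProcess_succ (hp1 : ∑' k, p k = 1) (ω : Ω) :
    fkProcess p v ξ x n (k + 1) ω =
      Qfun p (v (n - (k + 1)) (walk ξ x k ω + ξ (k + 1) ω)) * fkWeight p v ξ x n k ω := by
  rw [fkProcess, fkWeight, Finset.prod_Icc_succ_top (by omega), ← fkWeight, ← walk_succ,
    ← mul_one_sub_Hfun hp1]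
  ring

theorem fkProcess_eq_tsum
    (hvrec : ∀ n x, v (n + 1) x = ∑' y, a y * Qfun p (v n (x - y))) (hk : k < n) (ω : Ω) :
    fkProcess p v ξ x n k ω =
      ∑' y, a (-y) * (Qfun p (v (n - (k + 1)) (walk ξ x k ω + y)) * fkWeight p v ξ x n k ω) := by
  rw [fkProcess, show n - k = n - (k + 1) + 1 by omega, hvrec, ← tsum_mul_right,
    ← (Equiv.neg ℤ).tsum_eq]
  simp only [Equiv.neg_apply, sub_neg_eq_add, mul_assoc]

theorem fkWeight_mem_Icc (hp0 : ∀ k, 0 ≤ p k) (hp1 : ∑' k, p k = 1)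
    (hmean_summ : Summable fun k : ℕ => (k : ℝ) * p k) (hmean : ∑' k : ℕ, (k : ℝ) * p k ≤ 1)
    (hv : ∀ n z, v n z ∈ Icc (0 : ℝ) 1) (ω : Ω) : fkWeight p v ξ x n k ω ∈ Icc (0 : ℝ) 1 := by
  have hfactor := fun j => one_sub_Hfun_mem_Icc hp0 hp1 hmean_summ hmean (hv (n - j) (walk ξ x j ω))
  exact ⟨Finset.prod_nonneg fun j _ => (hfactor j).1,
    Finset.prod_le_one (fun j _ => (hfactor j).1) fun j _ => (hfactor j).2⟩

variable [MeasurableSpace Ω]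

theorem measurable_fkWeight (hξmeas : ∀ n, Measurable (ξ n)) :
    Measurable[walkFiltration ξ hξmeas x k] (fkWeight p v ξ x n k) :=
  Finset.measurable_prod _ fun j hj =>
    (Measurable.of_discrete (f := fun z : ℤ => 1 - Hfun p (v (n - j) z))).comp
      (measurable_walk_walkFiltration hξmeas (Finset.mem_Icc.1 hj).2)

theorem measurable_fkProcess (hξmeas : ∀ n, Measurable (ξ n)) :
    Measurable[walkFiltration ξ hξmeas x k] (fkProcess p v ξ x n k) :=
  (Measurable.of_discrete.comp (measurable_walk_walkFiltration hξmeas le_rfl)).mul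
    (measurable_fkWeight hξmeas)

theorem integrable_fkProcess {P : Measure Ω} [IsFiniteMeasure P] (hp0 : ∀ k, 0 ≤ p k)
    (hp1 : ∑' k, p k = 1) (hmean_summ : Summable fun k : ℕ => (k : ℝ) * p k)
    (hmean : ∑' k : ℕ, (k : ℝ) * p k ≤ 1) (hv : ∀ n z, v n z ∈ Icc (0 : ℝ) 1)
    (hξmeas : ∀ n, Measurable (ξ n)) : Integrable (fkProcess p v ξ x n k) P := by
  refine .of_bound ((measurable_fkProcess hξmeas).mono
    ((walkFiltration ξ hξmeas x).le k) le_rfl).aestronglyMeasurable 1 (ae_of_all _ fun ω => ?_)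
  have hw : fkWeight p v ξ x n k ω ∈ Icc (0 : ℝ) 1 :=
    fkWeight_mem_Icc hp0 hp1 hmean_summ hmean hv ω
  have hvk := hv (n - k) (walk ξ x k ω)
  rw [fkProcess, Real.norm_of_nonneg (mul_nonneg hvk.1 hw.1)]
  exact mul_le_one₀ hvk.2 hw.1 hw.2

theorem condExp_fkProcess_succ {P : Measure Ω} [IsProbabilityMeasure P]
    (hp0 : ∀ k, 0 ≤ p k) (hp1 : ∑' k, p k = 1)
    (hmean_summ : Summable fun k : ℕ => (k : ℝ) * p k) (hmean : ∑' k : ℕ, (k : ℝ) * p k ≤ 1)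
    (ha0 : ∀ y, 0 ≤ a y) (hv : ∀ n z, v n z ∈ Icc (0 : ℝ) 1)
    (hvrec : ∀ n x, v (n + 1) x = ∑' y, a y * Qfun p (v n (x - y)))
    (hξmeas : ∀ n, Measurable (ξ n)) (hξindep : iIndepFun ξ P)
    (hξlaw : ∀ n y, P {ω | ξ n ω = y} = ENNReal.ofReal (a (-y))) (hk : k < n) :
    P[fkProcess p v ξ x n (k + 1) | walkFiltration ξ hξmeas x k] =ᵐ[P]
      fkProcess p v ξ x n k := by
  set ℱ := walkFiltration ξ hξmeas x
  -- `Z_{k+1} = h (ξ (k + 1))`, where each `h y` is determined by the walk up to time `k`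
  let h : ℤ → Ω → ℝ := fun y ω =>
    Qfun p (v (n - (k + 1)) (walk ξ x k ω + y)) * fkWeight p v ξ x n k ω
  have hh : ∀ y, Measurable[ℱ k] (h y) := fun y =>
    ((Measurable.of_discrete (f := fun z : ℤ => Qfun p (v (n - (k + 1)) (z + y)))).comp
      (measurable_walk_walkFiltration hξmeas le_rfl)).mul (measurable_fkWeight hξmeas)
  have hbound : ∀ y ω, ‖h y ω‖ ≤ 1 := fun y ω => by
    have hQ := Qfun_mem_Icc hp0 hp1 (hv (n - (k + 1)) (walk ξ x k ω + y))
    have hw : fkWeight p v ξ x n k ω ∈ Icc (0 : ℝ) 1 :=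
      fkWeight_mem_Icc hp0 hp1 hmean_summ hmean hv ω
    rw [Real.norm_of_nonneg (mul_nonneg hQ.1 hw.1)]
    exact mul_le_one₀ hQ.2 hw.1 hw.2
  have hlaw : ∀ y, P.real (ξ (k + 1) ⁻¹' {y}) = a (-y) := fun y => by
    change (P {ω | ξ (k + 1) ω = y}).toReal = a (-y)
    rw [hξlaw, ENNReal.toReal_ofReal (ha0 _)]
  refine (ae_eq_condExp_of_forall_setIntegral_eq (ℱ.le k)
    (integrable_fkProcess hp0 hp1 hmean_summ hmean hv hξmeas)
    (fun s _ _ => (integrable_fkProcess hp0 hp1 hmean_summ hmean hv hξmeas).integrableOn)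
    (fun s hs _ => ?_) (measurable_fkProcess hξmeas).aestronglyMeasurable).symm
  calc ∫ ω in s, fkProcess p v ξ x n k ω ∂P
      = ∫ ω in s, ∑' y, P.real (ξ (k + 1) ⁻¹' {y}) * h y ω ∂P := by
        simp only [hlaw, h, fkProcess_eq_tsum hvrec hk]
    _ = ∫ ω in s, h (ξ (k + 1) ω) ω ∂P :=
        (setIntegral_comp_of_indep (ℱ.le k) (hξmeas _)
          (indep_walkFiltration_increment hξmeas hξindep k) hh hbound hs).symm
    _ = ∫ ω in s, fkProcess p v ξ x n (k + 1) ω ∂P := by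
        simp only [h, fkProcess_succ hp1]

theorem integral_fkProcess {P : Measure Ω} [IsProbabilityMeasure P]
    (hp0 : ∀ k, 0 ≤ p k) (hp1 : ∑' k, p k = 1)
    (hmean_summ : Summable fun k : ℕ => (k : ℝ) * p k) (hmean : ∑' k : ℕ, (k : ℝ) * p k ≤ 1)
    (ha0 : ∀ y, 0 ≤ a y) (hv : ∀ n z, v n z ∈ Icc (0 : ℝ) 1)
    (hvrec : ∀ n x, v (n + 1) x = ∑' y, a y * Qfun p (v n (x - y)))
    (hξmeas : ∀ n, Measurable (ξ n)) (hξindep : iIndepFun ξ P)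
    (hξlaw : ∀ n y, P {ω | ξ n ω = y} = ENNReal.ofReal (a (-y))) (hk : k ≤ n) :
    ∫ ω, fkProcess p v ξ x n k ω ∂P = v n x := by
  rw [integral_eq_integral_zero_of_condExp_succ (ℱ := walkFiltration ξ hξmeas x) fun j hj =>
    condExp_fkProcess_succ hp0 hp1 hmean_summ hmean ha0 hv hvrec hξmeas hξindep hξlaw
      (hj.trans_le hk)]
  simp [fkProcess_zero]

end FeynmanKac

theorem spacetime_fk_martingale_general
    (p : ℕ → ℝ) (a : ℤ → ℝ)
    -- offspring distribution: critical, variance σ2 ∈ (0,∞), finite third moment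
    (hp0 : ∀ k, 0 ≤ p k)
    (hp1 : ∑' k, p k = 1)
    (hpmean_summ : Summable (fun k : ℕ => (k : ℝ) * p k))
    (hpmean : ∑' k : ℕ, (k : ℝ) * p k = 1)
    -- step distribution: mean 0, variance η2 ∈ (0,∞), finite r-th moment for some r > 4
    (ha0 : ∀ y, 0 ≤ a y)
    (ha1 : ∑' y, a y = 1)
    -- v n x = P{M_n > x}: tail distribution of the rightmost position in generation n
    (v : ℕ → ℤ → ℝ)
    (hv0 : ∀ x : ℤ, v 0 x = if x < 0 then 1 else 0)
    (hvrec : ∀ (n : ℕ) (x : ℤ),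
      v (n + 1) x = ∑' y : ℤ, a y * (1 - ∑' k : ℕ, p k * (1 - v n (x - y)) ^ k))
    -- the random walk W with i.i.d. increments of law P{increment = y} = a(-y);
    -- walk ξ x n ω = x + ξ₁ + ⋯ + ξₙ is the walk started at x
    {Ω : Type} [MeasurableSpace Ω] (P : Measure Ω) [IsProbabilityMeasure P]
    (ξ : ℕ → Ω → ℤ)
    (hξmeas : ∀ n, Measurable (ξ n))
    (hξindep : iIndepFun ξ P)
    (hξlaw : ∀ (n : ℕ) (y : ℤ), P {ω | ξ n ω = y} = ENNReal.ofReal (a (-y)))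
 :
    (∀ (x : ℤ) (n : ℕ),
      (∀ k : ℕ, k ≤ n →
        StronglyMeasurable[(walkFiltration ξ hξmeas x) k]
          (fun ω : Ω => v (n - k) (walk ξ x k ω) *
            ∏ j ∈ Finset.Icc 1 k, (1 - Hfun p (v (n - j) (walk ξ x j ω)))))
      ∧ (∀ k : ℕ, k + 1 ≤ n →
          P[(fun ω : Ω => v (n - (k + 1)) (walk ξ x (k + 1) ω) *
              ∏ j ∈ Finset.Icc 1 (k + 1), (1 - Hfun p (v (n - j) (walk ξ x j ω))))
            | (walkFiltration ξ hξmeas x) k]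
          =ᵐ[P] fun ω : Ω => v (n - k) (walk ξ x k ω) *
              ∏ j ∈ Finset.Icc 1 k, (1 - Hfun p (v (n - j) (walk ξ x j ω)))))
    ∧ ∀ (n m : ℕ), n ≤ m → ∀ x : ℤ,
        v m x = ∫ ω, v n (walk ξ x (m - n) ω) *
            ∏ j ∈ Finset.Icc 1 (m - n), (1 - Hfun p (v (m - j) (walk ξ x j ω))) ∂P := by
  have hv : ∀ n z, v n z ∈ Icc (0 : ℝ) 1 :=
    mem_Icc_of_Qfun_recursion hp0 hp1 ha0 ha1 (fun z => by rw [hv0]; split_ifs <;> simp) hvrec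
  refine ⟨fun x n => ⟨fun k _ => (measurable_fkProcess hξmeas).stronglyMeasurable,
    fun k hk => condExp_fkProcess_succ hp0 hp1 hpmean_summ hpmean.le ha0 hv hvrec hξmeas hξindep
      hξlaw hk⟩, fun n m hnm x => ?_⟩
  have h := integral_fkProcess (x := x) (k := m - n) hp0 hp1 hpmean_summ hpmean.le ha0 hv hvrec
    hξmeas hξindep hξlaw (Nat.sub_le m n)
  simp only [fkProcess, fkWeight, Nat.sub_sub_self hnm] at h
  exact h.symm

/-- Proposition 12 of Lalley–Shao, space-time Feynman–Kac formula:
for every `n` and every starting point `x`, the process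
`Z_k = v_{n-k}(W_k) · ∏_{j=1}^{k} (1 - H(v_{n-j}(W_j)))`, `k = 0, …, n`, is a
martingale for the natural filtration of the walk (adapted, and with the martingale
conditional-expectation property up to time `n`); consequently, for `n ≤ m`,
`v_m(x) = E^x[ v_n(W_{m-n}) ∏_{j=1}^{m-n} (1 - H(v_{m-j}(W_j))) ]`. -/
theorem spacetime_fk_martingale
    (p : ℕ → ℝ) (a : ℤ → ℝ) (σ2 η2 r : ℝ)
    -- offspring distribution: critical, variance σ2 ∈ (0,∞), finite third moment
    (hp0 : ∀ k, 0 ≤ p k)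
    (hp1 : ∑' k, p k = 1)
    (hpmean_summ : Summable (fun k : ℕ => (k : ℝ) * p k))
    (hpmean : ∑' k : ℕ, (k : ℝ) * p k = 1)
    (hp2summ : Summable (fun k : ℕ => (k : ℝ) ^ 2 * p k))
    (hσ2 : σ2 = (∑' k : ℕ, (k : ℝ) ^ 2 * p k) - 1)
    (hσ2pos : 0 < σ2)
    (hp3summ : Summable (fun k : ℕ => (k : ℝ) ^ 3 * p k))
    -- step distribution: mean 0, variance η2 ∈ (0,∞), finite r-th moment for some r > 4
    (ha0 : ∀ y, 0 ≤ a y)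
    (ha1 : ∑' y, a y = 1)
    (hamean_summ : Summable (fun y : ℤ => (y : ℝ) * a y))
    (hamean : ∑' y : ℤ, (y : ℝ) * a y = 0)
    (ha2summ : Summable (fun y : ℤ => (y : ℝ) ^ 2 * a y))
    (hη2 : η2 = ∑' y : ℤ, (y : ℝ) ^ 2 * a y)
    (hη2pos : 0 < η2)
    (hr : 4 < r)
    (harsumm : Summable (fun y : ℤ => |(y : ℝ)| ^ r * a y))
    -- v n x = P{M_n > x}: tail distribution of the rightmost position in generation n
    (v : ℕ → ℤ → ℝ)
    (hv0 : ∀ x : ℤ, v 0 x = if x < 0 then 1 else 0)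
    (hvrec : ∀ (n : ℕ) (x : ℤ),
      v (n + 1) x = ∑' y : ℤ, a y * (1 - ∑' k : ℕ, p k * (1 - v n (x - y)) ^ k))
    -- the random walk W with i.i.d. increments of law P{increment = y} = a(-y);
    -- walk ξ x n ω = x + ξ₁ + ⋯ + ξₙ is the walk started at x
    {Ω : Type} [MeasurableSpace Ω] (P : Measure Ω) [IsProbabilityMeasure P]
    (ξ : ℕ → Ω → ℤ)
    (hξmeas : ∀ n, Measurable (ξ n))
    (hξindep : iIndepFun ξ P)
    (hξlaw : ∀ (n : ℕ) (y : ℤ), P {ω | ξ n ω = y} = ENNReal.ofReal (a (-y)))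
 :
    (∀ (x : ℤ) (n : ℕ),
      (∀ k : ℕ, k ≤ n →
        StronglyMeasurable[(walkFiltration ξ hξmeas x) k]
          (fun ω : Ω => v (n - k) (walk ξ x k ω) *
            ∏ j ∈ Finset.Icc 1 k, (1 - Hfun p (v (n - j) (walk ξ x j ω)))))
      ∧ (∀ k : ℕ, k + 1 ≤ n →
          P[(fun ω : Ω => v (n - (k + 1)) (walk ξ x (k + 1) ω) *
              ∏ j ∈ Finset.Icc 1 (k + 1), (1 - Hfun p (v (n - j) (walk ξ x j ω))))
            | (walkFiltration ξ hξmeas x) k]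
          =ᵐ[P] fun ω : Ω => v (n - k) (walk ξ x k ω) *
              ∏ j ∈ Finset.Icc 1 k, (1 - Hfun p (v (n - j) (walk ξ x j ω)))))
    ∧ ∀ (n m : ℕ), n ≤ m → ∀ x : ℤ,
        v m x = ∫ ω, v n (walk ξ x (m - n) ω) *
            ∏ j ∈ Finset.Icc 1 (m - n), (1 - Hfun p (v (m - j) (walk ξ x j ω))) ∂P :=
  spacetime_fk_martingale_general p a hp0 hp1 hpmean_summ hpmean ha0 ha1 v hv0 hvrec P ξ hξmeas
    hξindep hξlaw
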